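/- Additivity of outer density across a partition: let U be a vertex set, X ⊆ U, and suppose X is partitioned into nonempty parts X_1,…,X_m with associated sets U_1,…,U_m such that for each j, U_j\X_j ⊆ U\X together with the part structure used in the proof of Proposition 3 (X_j = X ∩ (B_j\B_{j−1}), U_j = (U\X) ∪ B_{j−1}). Then d(X, U\X) ≥ Σ_j (|X_j|/|X|) · d(X_j, U_j\X_j); in particular if each d(X_j, U_j\X_j) ≥ c, then d(X, U\X) ≥ c. -/

import Mathlib

open Finset

variable {V : Type*}

/-- Edges of `G` with both endpoints in `X`. -/
def innerEdges [Fintype V] [DecidableEq V] (G : SimpleGraph V) [DecidableRel G.Adj]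
    (X : Finset V) : Finset (Sym2 V) :=
  G.edgeFinset.filter (fun e => ∀ v ∈ e, v ∈ X)

/-- Marginal edges `Ẽ(X,Y) = E(X) ∪ E(X,Y)` (for disjoint `X`, `Y`):
edges with both endpoints in `X ∪ Y`, at least one in `X`. -/
def margEdges [Fintype V] [DecidableEq V] (G : SimpleGraph V) [DecidableRel G.Adj]
    (X Y : Finset V) : Finset (Sym2 V) :=
  G.edgeFinset.filter (fun e => (∀ v ∈ e, v ∈ X ∪ Y) ∧ ∃ v ∈ e, v ∈ X)

/-- Outer density `d(X,Y) = |Ẽ(X \ Y, Y)| / |X \ Y|`. -/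
def outDensity [Fintype V] [DecidableEq V] (G : SimpleGraph V) [DecidableRel G.Adj]
    (X Y : Finset V) : ℚ :=
  ((margEdges G (X \ Y) Y).card : ℚ) / ((X \ Y).card : ℚ)

/-- `W` is locally dense: there is no nonempty `X ⊆ W` and nonempty `Y` with `Y ∩ W = ∅`
such that `d(X, W \ X) ≤ d(Y, W)`. -/
def LocallyDense [Fintype V] [DecidableEq V] (G : SimpleGraph V) [DecidableRel G.Adj]
    (W : Finset V) : Prop :=
  ¬ ∃ X Y : Finset V, X.Nonempty ∧ Y.Nonempty ∧ X ⊆ W ∧ Y ∩ W = ∅ ∧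
      outDensity G X (W \ X) ≤ outDensity G Y W

/-- Number of neighbors of `x` in `U`. -/
def degIn [DecidableEq V] (G : SimpleGraph V) [DecidableRel G.Adj] (x : V) (U : Finset V) : ℕ :=
  (U.filter (G.Adj x)).card

/-!
With `X_j = X ∩ (B j \ B (j - 1))` and `Y_j = ((U \ X) ∪ B (j - 1)) \ X_j`, every `X_j ∪ Y_j` lies
in `X ∪ (U \ X)` and every later part `X_k` (`k > j`) avoids `X_j ∪ Y_j`, because `X_k` misses
`B (k - 1) ⊇ B j`. Hence the marginal edge sets `Ẽ(X_j, Y_j)` are pairwise disjoint subsets of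
`Ẽ(X, U \ X)`. The weight `|X_j| / |X|` turns `d(X_j, Y_j)` into `|Ẽ(X_j, Y_j)| / |X|`, so the
weighted sum is at most `d(X, U \ X)`; the `X_j` partition `X`, so the weights sum to `1` and the
weighted sum is at least `c`.
-/

section MarginalEdges

variable [Fintype V] [DecidableEq V] (G : SimpleGraph V) [DecidableRel G.Adj]

lemma margEdges_mono {X Y X' Y' : Finset V} (hX : X' ⊆ X) (hXY : X' ∪ Y' ⊆ X ∪ Y) :
    margEdges G X' Y' ⊆ margEdges G X Y := by
  intro e he
  simp only [margEdges, mem_filter] at he ⊢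
  obtain ⟨heG, hmem, v, hv, hvX⟩ := he
  exact ⟨heG, fun w hw => hXY (hmem w hw), v, hv, hX hvX⟩

lemma disjoint_margEdges {X₁ Y₁ X₂ Y₂ : Finset V} (h : Disjoint X₂ (X₁ ∪ Y₁)) :
    Disjoint (margEdges G X₁ Y₁) (margEdges G X₂ Y₂) := by
  refine disjoint_left.mpr fun e he₁ he₂ => ?_
  simp only [margEdges, mem_filter] at he₁ he₂
  obtain ⟨v, hv, hvX⟩ := he₂.2.2
  exact disjoint_left.mp h hvX (he₁.2.1 v hv)

lemma sum_card_margEdges_le {ι : Type*} [LinearOrder ι] (s : Finset ι) {X Y : Finset V}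
    {P Q : ι → Finset V} (hP : ∀ j ∈ s, P j ⊆ X) (hPQ : ∀ j ∈ s, P j ∪ Q j ⊆ X ∪ Y)
    (hlayer : ∀ j ∈ s, ∀ k ∈ s, j < k → Disjoint (P k) (P j ∪ Q j)) :
    ∑ j ∈ s, #(margEdges G (P j) (Q j)) ≤ #(margEdges G X Y) := by
  have hdisj : (s : Set ι).PairwiseDisjoint fun j => margEdges G (P j) (Q j) := by
    intro j hj k hk hjk
    rcases hjk.lt_or_gt with h | h
    · exact disjoint_margEdges G (hlayer j hj k hk h)
    · exact (disjoint_margEdges G (hlayer k hk j hj h)).symm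
  rw [← card_biUnion hdisj]
  exact card_le_card (biUnion_subset.mpr fun j hj => margEdges_mono G (hP j hj) (hPQ j hj))

lemma outDensity_of_disjoint {X Y : Finset V} (h : Disjoint X Y) :
    outDensity G X Y = #(margEdges G X Y) / #X := by
  rw [outDensity, sdiff_eq_self_of_disjoint h]

lemma card_div_mul_outDensity {X Y : Finset V} (h : Disjoint X Y) (N : ℚ) :
    #X / N * outDensity G X Y = #(margEdges G X Y) / N := by
  rw [outDensity_of_disjoint G h]
  rcases X.eq_empty_or_nonempty with rfl | hX
  · -- both sides vanish: `0 / 0 = 0` on the left, no marginal edges on the right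
    simp [margEdges]
  · have : (#X : ℚ) ≠ 0 := by exact_mod_cast hX.card_pos.ne'
    field_simp

lemma sum_card_div_mul_outDensity_le {ι : Type*} [LinearOrder ι] (s : Finset ι)
    {X Y : Finset V} {P Q : ι → Finset V} (hXY : Disjoint X Y) (hPQ : ∀ j ∈ s, Disjoint (P j) (Q j))
    (hP : ∀ j ∈ s, P j ⊆ X) (hPQX : ∀ j ∈ s, P j ∪ Q j ⊆ X ∪ Y)
    (hlayer : ∀ j ∈ s, ∀ k ∈ s, j < k → Disjoint (P k) (P j ∪ Q j)) :
    ∑ j ∈ s, (#(P j) : ℚ) / #X * outDensity G (P j) (Q j) ≤ outDensity G X Y := by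
  rw [sum_congr rfl fun j hj => card_div_mul_outDensity G (hPQ j hj) _, ← sum_div,
    outDensity_of_disjoint G hXY]
  gcongr
  exact_mod_cast sum_card_margEdges_le G s hP hPQX hlayer

end MarginalEdges

section Chain

variable {B : ℕ → Finset V} {m : ℕ}

lemma monotoneOn_Iic_of_subset_succ (hB : ∀ j < m, B j ⊆ B (j + 1)) :
    MonotoneOn B (Set.Iic m) :=
  monotoneOn_of_le_succ Set.ordConnected_Iic fun j _ _ hj => hB j (by simpa using hj)

variable [DecidableEq V]

lemma card_inter_eq_add_sum_card_inter_sdiff_pred (S : Finset V)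
    (hB : ∀ j < m, B j ⊆ B (j + 1)) :
    #(S ∩ B m) = #(S ∩ B 0) + ∑ j ∈ Icc 1 m, #(S ∩ (B j \ B (j - 1))) := by
  induction m with
  | zero => simp
  | succ m ih =>
    have hstep : #(S ∩ B (m + 1)) = #(S ∩ B m) + #(S ∩ (B (m + 1) \ B m)) := by
      rw [← card_union_of_disjoint (disjoint_sdiff.mono inter_subset_right inter_subset_right),
        ← inter_union_distrib_left, union_sdiff_of_subset (hB m (by omega))]
    rw [sum_Icc_succ_top (by omega), hstep, ih fun j hj => hB j (by omega)]
    simp [add_assoc]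

lemma disjoint_inter_sdiff_pred (hmono : MonotoneOn B (Set.Iic m)) (X U : Finset V) {j k : ℕ}
    (hjk : j < k) (hk : k ≤ m) :
    Disjoint (X ∩ (B k \ B (k - 1)))
      (X ∩ (B j \ B (j - 1)) ∪ ((U \ X) ∪ B (j - 1)) \ (X ∩ (B j \ B (j - 1)))) := by
  have hj : B j ⊆ B (k - 1) := hmono (by simp; omega) (by simp; omega) (by omega)
  have hj' : B (j - 1) ⊆ B (k - 1) := hmono (by simp; omega) (by simp; omega) (by omega)
  refine disjoint_left.mpr fun v hvk hv => ?_
  simp only [mem_inter, mem_sdiff, mem_union] at hvk hv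
  rcases hv with ⟨-, hvj, -⟩ | ⟨⟨-, hvX⟩ | hvj, -⟩
  · exact hvk.2.2 (hj hvj)
  · exact hvX hvk.1
  · exact hvk.2.2 (hj' hvj)

end Chain

theorem outer_density_partition_additivity_general [Fintype V] [DecidableEq V] (G : SimpleGraph V) [DecidableRel G.Adj]
    (U X : Finset V) (m : ℕ) (B : ℕ → Finset V)
    (hBmono : ∀ j, j < m → B j ⊆ B (j + 1)) (hBU : ∀ j, j ≤ m → B j ⊆ U)
    (hB0 : Disjoint X (B 0)) (hXm : X ⊆ B m) (hX : X.Nonempty) :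
    (∑ j ∈ Finset.Icc 1 m,
        ((X ∩ (B j \ B (j - 1))).card : ℚ) / (X.card : ℚ) *
          outDensity G (X ∩ (B j \ B (j - 1)))
            (((U \ X) ∪ B (j - 1)) \ (X ∩ (B j \ B (j - 1)))))
      ≤ outDensity G X (U \ X) ∧
    ∀ c : ℚ,
      (∀ j, 1 ≤ j → j ≤ m →
        c ≤ outDensity G (X ∩ (B j \ B (j - 1)))
              (((U \ X) ∪ B (j - 1)) \ (X ∩ (B j \ B (j - 1))))) →
      c ≤ outDensity G X (U \ X) := by
  have hmono := monotoneOn_Iic_of_subset_succ hBmono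
  have hsum := sum_card_div_mul_outDensity_le G (Icc 1 m) (Y := U \ X) disjoint_sdiff
    (fun _ _ => disjoint_sdiff) (fun _ _ => inter_subset_left)
    (fun j hj v => by
      have hBU' := hBU (j - 1) (by simp at hj; omega)
      simp only [mem_union, mem_sdiff, mem_inter]
      tauto)
    (fun j _ k hk hjk => disjoint_inter_sdiff_pred hmono X U hjk (mem_Icc.mp hk).2)
  refine ⟨hsum, fun c hc => ?_⟩
  have hweights : ∑ j ∈ Icc 1 m, (#(X ∩ (B j \ B (j - 1))) : ℚ) / #X = 1 := by
    have hcard := card_inter_eq_add_sum_card_inter_sdiff_pred X hBmono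
    rw [inter_eq_left.mpr hXm, disjoint_iff_inter_eq_empty.mp hB0, card_empty, zero_add] at hcard
    rw [← sum_div, div_eq_one_iff_eq (by exact_mod_cast hX.card_pos.ne'), hcard, Nat.cast_sum]
  calc c = ∑ j ∈ Icc 1 m, (#(X ∩ (B j \ B (j - 1))) : ℚ) / #X * c := by
        rw [← sum_mul, hweights, one_mul]
    _ ≤ _ := sum_le_sum fun j hj => by
        obtain ⟨hj1, hjm⟩ := mem_Icc.mp hj
        gcongr
        exact hc j hj1 hjm
    _ ≤ _ := hsum

theorem outer_density_partition_additivity [Fintype V] [DecidableEq V] (G : SimpleGraph V) [DecidableRel G.Adj]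
    (U X : Finset V) (hXU : X ⊆ U) (m : ℕ) (B : ℕ → Finset V)
    (hBmono : ∀ j, j < m → B j ⊆ B (j + 1)) (hBU : ∀ j, j ≤ m → B j ⊆ U)
    (hB0 : Disjoint X (B 0)) (hXm : X ⊆ B m) (hX : X.Nonempty)
    (hne : ∀ j, 1 ≤ j → j ≤ m → (X ∩ (B j \ B (j - 1))).Nonempty) :
    (∑ j ∈ Finset.Icc 1 m,
        ((X ∩ (B j \ B (j - 1))).card : ℚ) / (X.card : ℚ) *
          outDensity G (X ∩ (B j \ B (j - 1)))
            (((U \ X) ∪ B (j - 1)) \ (X ∩ (B j \ B (j - 1)))))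
      ≤ outDensity G X (U \ X) ∧
    ∀ c : ℚ,
      (∀ j, 1 ≤ j → j ≤ m →
        c ≤ outDensity G (X ∩ (B j \ B (j - 1)))
              (((U \ X) ∪ B (j - 1)) \ (X ∩ (B j \ B (j - 1))))) →
      c ≤ outDensity G X (U \ X) :=
  outer_density_partition_additivity_general G U X m B hBmono hBU hB0 hXm hX
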